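/- Under the assumptions of the block-decoupling construction, the upper-left block of Uᴴ M conj(U) equals (1+ξξᴴ)^{-1/2}(L₁ − Gξᵀ − ξGᵀ + ξL₂ξᵀ)(1+conj(ξ)ξᵀ)^{-1/2}, which also equals (1+ξξᴴ)^{-1/2}(L₁ − ξGᵀ)(1+conj(ξ)ξᵀ)^{1/2} and (1+ξξᴴ)^{1/2}(L₁ − Gξᵀ)(1+conj(ξ)ξᵀ)^{-1/2}. -/

import Mathlib

/-! Write `S = (1 + ξξᴴ)^{1/2}`, so that `conj S = (1 + conj(ξ)ξᵀ)^{1/2}` and `conj(S⁻¹) = (conj S)⁻¹`.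
Block multiplication gives the first form of the upper-left block, `S⁻¹ K conj(S⁻¹)` with
`K = L₁ − Gξᵀ − ξGᵀ + ξL₂ξᵀ`. Multiplying the Riccati equation on the right by `ξᵀ` factors
`K = (L₁ − ξGᵀ)(conj S)²`; transposing it (`L₁`, `L₂` are symmetric) and multiplying on the left
by `ξ` factors `K = S²(L₁ − Gξᵀ)`. Cancelling one square root gives the other two forms. -/

open Matrix ComplexOrder

/-- The positive semidefinite square root of `1 + ξ * ξᴴ`. -/
noncomputable def sqrtOnePlusSelfMulConjTranspose {n₁ n₂ : ℕ}
    (ξ : Matrix (Fin n₁) (Fin n₂) ℂ) : Matrix (Fin n₁) (Fin n₁) ℂ :=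
  (Matrix.PosSemidef.add Matrix.PosSemidef.one (Matrix.posSemidef_self_mul_conjTranspose ξ)).1.eigenvectorUnitary.1 *
    Matrix.diagonal ((↑) ∘ (√·) ∘ (Matrix.PosSemidef.add Matrix.PosSemidef.one (Matrix.posSemidef_self_mul_conjTranspose ξ)).1.eigenvalues) *
    (star (Matrix.PosSemidef.add Matrix.PosSemidef.one (Matrix.posSemidef_self_mul_conjTranspose ξ)).1.eigenvectorUnitary : Matrix _ _ ℂ)

/-- The positive semidefinite square root of `1 + ξᴴ * ξ`. -/
noncomputable def sqrtOnePlusConjTransposeMulSelf {n₁ n₂ : ℕ}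
    (ξ : Matrix (Fin n₁) (Fin n₂) ℂ) : Matrix (Fin n₂) (Fin n₂) ℂ :=
  (Matrix.PosSemidef.add Matrix.PosSemidef.one (Matrix.posSemidef_conjTranspose_mul_self ξ)).1.eigenvectorUnitary.1 *
    Matrix.diagonal ((↑) ∘ (√·) ∘ (Matrix.PosSemidef.add Matrix.PosSemidef.one (Matrix.posSemidef_conjTranspose_mul_self ξ)).1.eigenvalues) *
    (star (Matrix.PosSemidef.add Matrix.PosSemidef.one (Matrix.posSemidef_conjTranspose_mul_self ξ)).1.eigenvectorUnitary : Matrix _ _ ℂ)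

/-- The standard unitary block matrix built from `ξ`. -/
noncomputable def blockUnitary {n₁ n₂ : ℕ} (ξ : Matrix (Fin n₁) (Fin n₂) ℂ) :
    Matrix (Fin n₁ ⊕ Fin n₂) (Fin n₁ ⊕ Fin n₂) ℂ :=
  Matrix.fromBlocks
    (sqrtOnePlusSelfMulConjTranspose ξ)⁻¹ (ξ * (sqrtOnePlusConjTransposeMulSelf ξ)⁻¹)
    (-(ξᴴ * (sqrtOnePlusSelfMulConjTranspose ξ)⁻¹)) (sqrtOnePlusConjTransposeMulSelf ξ)⁻¹

namespace Matrix

variable {m n R : Type*} [CommRing R]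

theorem eq_mul_one_add_of_riccati [Fintype m] [Fintype n] [DecidableEq m]
    {L₁ : Matrix m m R} {L₂ : Matrix n n R} {G ξ η : Matrix m n R}
    (h : G + L₁ * η - ξ * L₂ - ξ * Gᵀ * η = 0) :
    L₁ - G * ξᵀ - ξ * Gᵀ + ξ * L₂ * ξᵀ = (L₁ - ξ * Gᵀ) * (1 + η * ξᵀ) := by
  have h' := congrArg (· * ξᵀ) h
  simp only [Matrix.add_mul, Matrix.sub_mul, Matrix.zero_mul, Matrix.mul_assoc] at h'
  simp only [Matrix.mul_add, Matrix.mul_one, Matrix.sub_mul, Matrix.mul_assoc]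
  linear_combination (norm := abel) -h'

theorem eq_one_add_mul_of_riccati [Fintype m] [Fintype n] [DecidableEq m]
    {L₁ : Matrix m m R} {L₂ : Matrix n n R} {G ξ η : Matrix m n R}
    (hL₁ : L₁ᵀ = L₁) (hL₂ : L₂ᵀ = L₂) (h : G + L₁ * η - ξ * L₂ - ξ * Gᵀ * η = 0) :
    L₁ - G * ξᵀ - ξ * Gᵀ + ξ * L₂ * ξᵀ = (1 + ξ * ηᵀ) * (L₁ - G * ξᵀ) := by
  have hT := congrArg (ξ * ·ᵀ) h
  simp only [transpose_add, transpose_sub, transpose_mul, transpose_zero, transpose_transpose,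
    hL₁, hL₂, Matrix.mul_add, Matrix.mul_sub, Matrix.mul_zero, Matrix.mul_assoc] at hT
  simp only [Matrix.add_mul, Matrix.one_mul, Matrix.mul_sub, Matrix.mul_assoc]
  linear_combination (norm := abel) -hT

variable [StarRing R]

theorem map_star_conjTranspose (ξ : Matrix m n R) : ξᴴ.map (starRingEnd R) = ξᵀ := by
  ext i j; simp [starRingEnd_apply]

theorem toBlocks₁₁_conjTranspose_mul_fromBlocks_mul_map_star [Fintype m] [Fintype n]
    (A : Matrix m m R) (B : Matrix n n R) (ξ : Matrix m n R) (L₁ : Matrix m m R)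
    (G : Matrix m n R) (C : Matrix n m R) (L₂ : Matrix n n R) :
    ((fromBlocks A (ξ * B) (-(ξᴴ * A)) B)ᴴ * fromBlocks L₁ G C L₂
        * (fromBlocks A (ξ * B) (-(ξᴴ * A)) B).map (starRingEnd R)).toBlocks₁₁ =
      Aᴴ * (L₁ - G * ξᵀ - ξ * C + ξ * L₂ * ξᵀ) * A.map (starRingEnd R) := by
  simp only [fromBlocks_conjTranspose, fromBlocks_map, fromBlocks_multiply, toBlocks_fromBlocks₁₁,
    conjTranspose_neg, conjTranspose_mul, conjTranspose_conjTranspose,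
    Matrix.map_neg _ (map_neg (starRingEnd R)), Matrix.map_mul, map_star_conjTranspose]
  simp only [Matrix.mul_sub, Matrix.sub_mul, Matrix.mul_add, Matrix.add_mul,
    Matrix.neg_mul, Matrix.mul_neg, Matrix.mul_assoc]
  abel

end Matrix

section

open MatrixOrder

variable {n₁ n₂ : ℕ} (ξ : Matrix (Fin n₁) (Fin n₂) ℂ)

theorem sqrtOnePlusSelfMulConjTranspose_eq_sqrt :
    sqrtOnePlusSelfMulConjTranspose ξ = CFC.sqrt (1 + ξ * ξᴴ) := by
  have hP := PosSemidef.one.add (posSemidef_self_mul_conjTranspose ξ)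
  rw [CFC.sqrt_eq_real_sqrt _ hP.nonneg, cfcₙ_eq_cfc, hP.1.cfc_eq]
  rfl

theorem sqrtOnePlusSelfMulConjTranspose_mul_self :
    sqrtOnePlusSelfMulConjTranspose ξ * sqrtOnePlusSelfMulConjTranspose ξ = 1 + ξ * ξᴴ := by
  rw [sqrtOnePlusSelfMulConjTranspose_eq_sqrt,
    CFC.sqrt_mul_sqrt_self _ (PosSemidef.one.add (posSemidef_self_mul_conjTranspose ξ)).nonneg]

theorem conjTranspose_sqrtOnePlusSelfMulConjTranspose :
    (sqrtOnePlusSelfMulConjTranspose ξ)ᴴ = sqrtOnePlusSelfMulConjTranspose ξ := by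
  rw [sqrtOnePlusSelfMulConjTranspose_eq_sqrt]
  exact (CFC.sqrt_nonneg _).isSelfAdjoint

theorem isUnit_det_sqrtOnePlusSelfMulConjTranspose :
    IsUnit (sqrtOnePlusSelfMulConjTranspose ξ).det := by
  have hP := PosDef.one.add_posSemidef (posSemidef_self_mul_conjTranspose ξ)
  rw [← isUnit_iff_isUnit_det, sqrtOnePlusSelfMulConjTranspose_eq_sqrt,
    CFC.isUnit_sqrt_iff _ hP.posSemidef.nonneg]
  exact hP.isUnit

end

theorem map_conj_sqrtOnePlusSelfMulConjTranspose_mul_self {n₁ n₂ : ℕ}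
    (ξ : Matrix (Fin n₁) (Fin n₂) ℂ) :
    (sqrtOnePlusSelfMulConjTranspose ξ).map (starRingEnd ℂ)
        * (sqrtOnePlusSelfMulConjTranspose ξ).map (starRingEnd ℂ) =
      1 + ξ.map (starRingEnd ℂ) * ξᵀ := by
  rw [← Matrix.map_mul, sqrtOnePlusSelfMulConjTranspose_mul_self, Matrix.map_add _ (map_add _),
    Matrix.map_one _ (map_zero _) (map_one _), Matrix.map_mul, map_star_conjTranspose]

/-- Under the block-decoupling construction, the upper-left block of `Uᴴ M conj(U)` equals
`(1+ξξᴴ)^{-1/2}(L₁ − Gξᵀ − ξGᵀ + ξL₂ξᵀ)(1+conj(ξ)ξᵀ)^{-1/2}`, which also equals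
`(1+ξξᴴ)^{-1/2}(L₁ − ξGᵀ)(1+conj(ξ)ξᵀ)^{1/2}` and `(1+ξξᴴ)^{1/2}(L₁ − Gξᵀ)(1+conj(ξ)ξᵀ)^{-1/2}`. -/
theorem block_decoupling_upper_left_block (n₁ n₂ : ℕ)
    (L₁ : Matrix (Fin n₁) (Fin n₁) ℂ) (L₂ : Matrix (Fin n₂) (Fin n₂) ℂ)
    (G : Matrix (Fin n₁) (Fin n₂) ℂ) (hL₁ : L₁ᵀ = L₁) (hL₂ : L₂ᵀ = L₂)
    (ξ : Matrix (Fin n₁) (Fin n₂) ℂ)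
    (hξ : G + L₁ * ξ.map (starRingEnd ℂ) - ξ * L₂ - ξ * Gᵀ * ξ.map (starRingEnd ℂ) = 0) :
    ((blockUnitary ξ)ᴴ * Matrix.fromBlocks L₁ G Gᵀ L₂
        * (blockUnitary ξ).map (starRingEnd ℂ)).toBlocks₁₁ =
      (sqrtOnePlusSelfMulConjTranspose ξ)⁻¹
        * (L₁ - G * ξᵀ - ξ * Gᵀ + ξ * L₂ * ξᵀ)
        * ((sqrtOnePlusSelfMulConjTranspose ξ)⁻¹).map (starRingEnd ℂ) ∧
    ((blockUnitary ξ)ᴴ * Matrix.fromBlocks L₁ G Gᵀ L₂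
        * (blockUnitary ξ).map (starRingEnd ℂ)).toBlocks₁₁ =
      (sqrtOnePlusSelfMulConjTranspose ξ)⁻¹ * (L₁ - ξ * Gᵀ)
        * (sqrtOnePlusSelfMulConjTranspose ξ).map (starRingEnd ℂ) ∧
    ((blockUnitary ξ)ᴴ * Matrix.fromBlocks L₁ G Gᵀ L₂
        * (blockUnitary ξ).map (starRingEnd ℂ)).toBlocks₁₁ =
      sqrtOnePlusSelfMulConjTranspose ξ * (L₁ - G * ξᵀ)
        * ((sqrtOnePlusSelfMulConjTranspose ξ)⁻¹).map (starRingEnd ℂ) := by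
  have hdet := isUnit_det_sqrtOnePlusSelfMulConjTranspose ξ
  have hcancel : (sqrtOnePlusSelfMulConjTranspose ξ).map (starRingEnd ℂ)
      * ((sqrtOnePlusSelfMulConjTranspose ξ)⁻¹).map (starRingEnd ℂ) = 1 := by
    rw [← Matrix.map_mul, mul_nonsing_inv _ hdet, Matrix.map_one _ (map_zero _) (map_one _)]
  rw [blockUnitary, toBlocks₁₁_conjTranspose_mul_fromBlocks_mul_map_star,
    conjTranspose_nonsing_inv, conjTranspose_sqrtOnePlusSelfMulConjTranspose]
  refine ⟨rfl, ?_, ?_⟩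
  · rw [eq_mul_one_add_of_riccati hξ, ← map_conj_sqrtOnePlusSelfMulConjTranspose_mul_self]
    simp only [Matrix.mul_assoc, hcancel, Matrix.mul_one]
  · rw [eq_one_add_mul_of_riccati hL₁ hL₂ hξ, show (ξ.map (starRingEnd ℂ))ᵀ = ξᴴ from rfl,
      ← sqrtOnePlusSelfMulConjTranspose_mul_self]
    simp only [← Matrix.mul_assoc, nonsing_inv_mul _ hdet, Matrix.one_mul]
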